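/- Let [B,i,j] be a framed representation on V¹ and [B',i',j'] a framed representation on V², assume dim V¹_i = dim V²_i for all i ∈ I, and assume [B,i,j] is stable. Then the element s := (0, (−i'_i)_i, (j_i)_i) of E(V¹,V²) ⊕ L(W,V²) ⊕ L(V¹,W) lies in the image of σ if and only if the two framed representations are isomorphic, i.e. if and only if there exists ξ ∈ L(V¹,V²) with every ξ_i invertible such that B'_h∘ξ_{s(h)} = ξ_{t(h)}∘B_h for all h ∈ H, ξ_i∘i_i = i'_i and j'_i∘ξ_i = j_i for all i ∈ I. -/
import Mathlib


noncomputable section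

open Module

/-- Assume `dim V¹ = dim V²` and `[B,i,j]` is stable.  The element
`s = (0, (−i'ᵢ)ᵢ, (jᵢ)ᵢ)` lies in the image of `σ` if and only if the two framed
representations are isomorphic. -/
theorem stmt4
    {I H : Type} [Fintype I] [Fintype H]
    (s t : H → I) (bar : H → H)
    (bar_invol : ∀ h, bar (bar h) = h) (bar_ne : ∀ h, bar h ≠ h)
    (s_bar : ∀ h, s (bar h) = t h) (t_bar : ∀ h, t (bar h) = s h)
    (eps : H → ℤ) (eps_pm : ∀ h, eps h = 1 ∨ eps h = -1)
    (eps_bar : ∀ h, eps (bar h) = - eps h)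
    (V1 V2 W : I → Type)
    [∀ i, AddCommGroup (V1 i)] [∀ i, Module ℂ (V1 i)] [∀ i, FiniteDimensional ℂ (V1 i)]
    [∀ i, AddCommGroup (V2 i)] [∀ i, Module ℂ (V2 i)] [∀ i, FiniteDimensional ℂ (V2 i)]
    [∀ i, AddCommGroup (W i)] [∀ i, Module ℂ (W i)] [∀ i, FiniteDimensional ℂ (W i)]
    (hdim : ∀ i, finrank ℂ (V1 i) = finrank ℂ (V2 i))
    (B : ∀ h, V1 (s h) →ₗ[ℂ] V1 (t h)) (iV : ∀ i, W i →ₗ[ℂ] V1 i) (jV : ∀ i, V1 i →ₗ[ℂ] W i)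
    (B' : ∀ h, V2 (s h) →ₗ[ℂ] V2 (t h)) (iV' : ∀ i, W i →ₗ[ℂ] V2 i) (jV' : ∀ i, V2 i →ₗ[ℂ] W i)
    -- stability of [B, iV, jV]
    (hstab : ∀ S : ∀ i, Submodule ℂ (V1 i),
      (∀ h, (S (s h)).map (B h) ≤ S (t h)) →
      (∀ i, S i ≤ LinearMap.ker (jV i)) →
      ∀ i, S i = ⊥) :
    -- `σ(ξ) = s` for some `ξ`  ↔  the framed representations are isomorphic
    ((∃ ξ : ∀ i, V1 i →ₗ[ℂ] V2 i,
        (∀ h, B' h ∘ₗ ξ (s h) - ξ (t h) ∘ₗ B h = 0) ∧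
        (∀ i, -(ξ i ∘ₗ iV i) = -(iV' i)) ∧
        (∀ i, jV' i ∘ₗ ξ i = jV i))
      ↔ (∃ ξ : ∀ i, V1 i →ₗ[ℂ] V2 i,
          (∀ i, Function.Bijective (ξ i)) ∧
          (∀ h, B' h ∘ₗ ξ (s h) = ξ (t h) ∘ₗ B h) ∧
          (∀ i, ξ i ∘ₗ iV i = iV' i) ∧
          (∀ i, jV' i ∘ₗ ξ i = jV i))) := by

  constructor
  · rintro ⟨ξ, hB, hi, hj⟩
    have hcomm : ∀ h, B' h ∘ₗ ξ (s h) = ξ (t h) ∘ₗ B h := by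
      intro h; have := hB h; rwa [sub_eq_zero] at this
    have hi' : ∀ i, ξ i ∘ₗ iV i = iV' i := fun i => neg_injective (hi i)
    have hker : ∀ i, LinearMap.ker (ξ i) = ⊥ := by
      apply hstab
      · intro h x hx
        rcases hx with ⟨y, hy, rfl⟩
        have : ξ (t h) (B h y) = B' h (ξ (s h) y) :=
          (congrArg (fun f => f y) (hcomm h)).symm
        simp only [LinearMap.mem_ker] at hy ⊢
        rw [this, hy, map_zero]
      · intro i x hx
        simp only [LinearMap.mem_ker] at hx ⊢
        rw [← hj i]
        simp [hx]
    have hbij : ∀ i, Function.Bijective (ξ i) := by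
      intro i
      have hinj : Function.Injective (ξ i) := LinearMap.ker_eq_bot.mp (hker i)
      exact ⟨hinj,
        (LinearMap.injective_iff_surjective_of_finrank_eq_finrank (hdim i)).mp hinj⟩
    exact ⟨ξ, hbij, hcomm, hi', hj⟩
  · rintro ⟨ξ, _, hB, hi, hj⟩
    exact ⟨ξ, fun h => by rw [hB h, sub_self], fun i => by rw [hi i], hj⟩
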